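/- arXiv:1403.7388 — 2 statements merged into one kernel-verified Lean document; each statement's English description precedes it below -/
import Mathlib

section
/- The Fresnel integral ∫_0^∞ e(z²) dz, where e(x) = exp(2πix), equals e^{iπ/4}/(2√2). -/
/-!
Rotate the segment `[0, R]` to the ray `[0, ωR]`, `ω = e^{iπ/4}`. Since `ω² = i`, the integrand
restricted to the ray is the Gaussian `exp (-2π s²)`, whose half-line integral is `1 / (2√2)`.
The integrand is entire, hence has a primitive, so the segment, ray and arc integrals are
differences of its values and the segment integral equals the ray integral minus the arc
integral. By Jordan's inequality the arc integral is `O(1/R)`.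
-/

open MeasureTheory intervalIntegral Real Complex Filter Topology

theorem intervalIntegral.integral_deriv_smul_comp_eq_sub {E : Type*} [NormedAddCommGroup E]
    [NormedSpace ℂ E] [CompleteSpace E] {f G : ℂ → E} {γ γ' : ℝ → ℂ} {a b : ℝ}
    (hG : ∀ z, HasDerivAt G (f z) z) (hγ : ∀ t ∈ Set.uIcc a b, HasDerivAt γ (γ' t) t)
    (hint : IntervalIntegrable (fun t => γ' t • f (γ t)) volume a b) :
    ∫ t in a..b, γ' t • f (γ t) = G (γ b) - G (γ a) :=
  integral_eq_sub_of_hasDerivAt (fun t ht => (hG (γ t)).scomp t (hγ t ht)) hint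

theorem tendsto_integral_exp_neg_mul_sq {b : ℝ} (hb : 0 < b) :
    Tendsto (fun R => ∫ x in (0 : ℝ)..R, Real.exp (-b * x ^ 2)) atTop (𝓝 (√(π / b) / 2)) := by
  rw [← integral_gaussian_Ioi b]
  exact intervalIntegral_tendsto_integral_Ioi 0 (integrable_exp_neg_mul_sq hb).integrableOn
    tendsto_id

theorem integral_exp_neg_mul_le_inv {c : ℝ} (hc : 0 < c) (a : ℝ) :
    ∫ t in (0 : ℝ)..a, Real.exp (-c * t) ≤ c⁻¹ := by
  have h : ∫ t in (0 : ℝ)..a, Real.exp (-c * t) = c⁻¹ * (1 - Real.exp (-c * a)) := by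
    rw [integral_comp_mul_left (fun t => Real.exp t) (neg_ne_zero.2 hc.ne'), integral_exp,
      smul_eq_mul, mul_zero, Real.exp_zero, inv_neg]
    ring
  rw [h]
  exact mul_le_of_le_one_right (inv_nonneg.2 hc.le) (by linarith [Real.exp_pos (-c * a)])

theorem hasDerivAt_ofReal_mul_exp_mul_I (R t : ℝ) :
    HasDerivAt (fun t : ℝ => (R : ℂ) * cexp (t * I)) (R * cexp (t * I) * I) t := by
  simpa [mul_assoc] using (((hasDerivAt_id t).ofReal_comp).mul_const I).cexp.const_mul (R : ℂ)

noncomputable def fresnelExp (z : ℂ) : ℂ := cexp (2 * π * I * z ^ 2)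

noncomputable def fresnelArc (R : ℝ) : ℂ :=
  ∫ t in (0 : ℝ)..π / 4, (R * cexp (t * I) * I) • fresnelExp (R * cexp (t * I))

section

local notation "ω" => cexp (I * π / 4)

theorem differentiable_fresnelExp : Differentiable ℂ fresnelExp := by
  unfold fresnelExp
  fun_prop

@[fun_prop]
theorem continuous_fresnelExp : Continuous fresnelExp :=
  differentiable_fresnelExp.continuous

theorem fresnelExp_eighthRoot_mul (s : ℝ) :
    fresnelExp (ω * s) = Real.exp (-(2 * π) * s ^ 2) := by
  have hω : ω ^ 2 = I := by
    rw [← Complex.exp_nat_mul, show (2 : ℕ) * (I * π / 4) = (π / 2 : ℝ) * I by push_cast; ring,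
      exp_mul_I]
    simp
  rw [fresnelExp, mul_pow, hω, ofReal_exp]
  congr 1
  push_cast
  linear_combination (2 * π * s ^ 2 : ℂ) * I_sq

theorem norm_fresnelExp_ofReal_mul_exp_mul_I (R t : ℝ) :
    ‖fresnelExp (R * cexp (t * I))‖ = Real.exp (-(2 * π) * R ^ 2 * Real.sin (2 * t)) := by
  have h : 2 * π * I * (R * cexp (t * I)) ^ 2 =
      (2 * π * R ^ 2 : ℝ) * (I * cexp ((2 * t : ℝ) * I)) := by
    rw [mul_pow, ← Complex.exp_nat_mul]
    push_cast
    ring_nf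
  rw [fresnelExp, norm_exp, h, re_ofReal_mul, I_mul_re, exp_ofReal_mul_I_im]
  congr 1
  ring

theorem norm_fresnelExp_ofReal_mul_exp_mul_I_le {R t : ℝ} (ht₀ : 0 ≤ t) (ht : t ≤ π / 4) :
    ‖fresnelExp (R * cexp (t * I))‖ ≤ Real.exp (-(8 * R ^ 2) * t) := by
  rw [norm_fresnelExp_ofReal_mul_exp_mul_I, Real.exp_le_exp]
  have hsin : 2 / π * (2 * t) ≤ Real.sin (2 * t) := mul_le_sin (by linarith) (by linarith)
  have : -(2 * π) * R ^ 2 * Real.sin (2 * t) ≤ -(2 * π) * R ^ 2 * (2 / π * (2 * t)) :=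
    mul_le_mul_of_nonpos_left hsin (by nlinarith [pi_pos, sq_nonneg R])
  refine this.trans_eq ?_
  field_simp
  ring

theorem norm_fresnelArc_le {R : ℝ} (hR : 0 < R) : ‖fresnelArc R‖ ≤ (8 * R)⁻¹ := by
  have hbound : ∀ t ∈ Set.Ioc 0 (π / 4), ‖(R * cexp (t * I) * I) • fresnelExp (R * cexp (t * I))‖
      ≤ R * Real.exp (-(8 * R ^ 2) * t) := by
    intro t ht
    rw [norm_smul, norm_mul, norm_mul, norm_exp_ofReal_mul_I, norm_I, norm_real,
      Real.norm_of_nonneg hR.le, mul_one, mul_one]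
    exact mul_le_mul_of_nonneg_left (norm_fresnelExp_ofReal_mul_exp_mul_I_le ht.1.le ht.2) hR.le
  calc ‖fresnelArc R‖ ≤ ∫ t in (0 : ℝ)..π / 4, R * Real.exp (-(8 * R ^ 2) * t) :=
        norm_integral_le_of_norm_le (by positivity) (ae_of_all _ hbound)
          (by apply Continuous.intervalIntegrable; fun_prop)
    _ ≤ R * (8 * R ^ 2)⁻¹ := by
        rw [intervalIntegral.integral_const_mul]
        exact mul_le_mul_of_nonneg_left (integral_exp_neg_mul_le_inv (by positivity) _) hR.le
    _ = (8 * R)⁻¹ := by field_simp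

theorem tendsto_fresnelArc_zero : Tendsto fresnelArc atTop (𝓝 0) := by
  refine squeeze_zero_norm' ?_
    (tendsto_inv_atTop_zero.comp (tendsto_id.const_mul_atTop (by norm_num : (0 : ℝ) < 8)))
  filter_upwards [eventually_gt_atTop 0] with R hR using norm_fresnelArc_le hR

theorem tendsto_integral_fresnelExp_eighthRoot_mul :
    Tendsto (fun R : ℝ => ∫ s in (0 : ℝ)..R, ω • fresnelExp (ω * s)) atTop
      (𝓝 (ω / (2 * √2))) := by
  have hray : (fun R : ℝ => ∫ s in (0 : ℝ)..R, ω • fresnelExp (ω * s)) =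
      fun R => ω * ((∫ s in (0 : ℝ)..R, Real.exp (-(2 * π) * s ^ 2) : ℝ) : ℂ) := by
    simp_rw [fresnelExp_eighthRoot_mul, smul_eq_mul, intervalIntegral.integral_const_mul,
      intervalIntegral.integral_ofReal]
  have hgauss : Tendsto (fun R => ∫ s in (0 : ℝ)..R, Real.exp (-(2 * π) * s ^ 2)) atTop
      (𝓝 (2 * √2)⁻¹) := by
    convert tendsto_integral_exp_neg_mul_sq (b := 2 * π) (by positivity) using 2
    rw [div_mul_cancel_right₀ pi_ne_zero, sqrt_inv]
    ring
  rw [hray]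
  convert hgauss.ofReal.const_mul ω using 2
  push_cast
  ring

theorem integral_fresnelExp_eq_sub_fresnelArc (R : ℝ) :
    ∫ x in (0 : ℝ)..R, fresnelExp x =
      (∫ s in (0 : ℝ)..R, ω • fresnelExp (ω * s)) - fresnelArc R := by
  obtain ⟨G, hG⟩ := differentiable_fresnelExp.isExactOn_univ
  have hprim : ∀ z, HasDerivAt G (fresnelExp z) z := fun z => hG z trivial
  have hsegment := integral_deriv_smul_comp_eq_sub (γ := fun x : ℝ => (x : ℂ)) (γ' := fun _ => 1)
    (a := 0) (b := R) hprim (fun t _ => (hasDerivAt_id t).ofReal_comp)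
    (by apply Continuous.intervalIntegrable; fun_prop)
  have hray := integral_deriv_smul_comp_eq_sub (γ := fun s : ℝ => ω * s) (γ' := fun _ => ω)
    (a := 0) (b := R) hprim (fun t _ => by simpa using (hasDerivAt_id t).ofReal_comp.const_mul ω)
    (by apply Continuous.intervalIntegrable; fun_prop)
  have harc := integral_deriv_smul_comp_eq_sub (γ := fun t : ℝ => R * cexp (t * I))
    (γ' := fun t => R * cexp (t * I) * I) (a := 0) (b := π / 4) hprim
    (fun t _ => hasDerivAt_ofReal_mul_exp_mul_I R t)
    (by apply Continuous.intervalIntegrable; fun_prop)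
  have hω : cexp (((π / 4 : ℝ) : ℂ) * I) = ω := by push_cast; ring_nf
  simp only [one_smul] at hsegment
  rw [hsegment, hray, fresnelArc, harc, hω, ofReal_zero, zero_mul, Complex.exp_zero, mul_one,
    mul_zero, mul_comm ω]
  ring

end

/-- The Fresnel integral `∫_0^∞ e(z²) dz`, with `e(x) = exp(2πix)`, understood as the
improper Riemann integral `lim_{R→∞} ∫_0^R exp(2πi z²) dz`, equals `e^{iπ/4}/(2√2)`. -/
theorem fresnel_integral_eq :
    Filter.Tendsto
      (fun R : ℝ => ∫ z in (0:ℝ)..R, Complex.exp (2 * Real.pi * Complex.I * (z:ℂ) ^ 2))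
      Filter.atTop
      (nhds (Complex.exp (Complex.I * Real.pi / 4) / (2 * Real.sqrt 2))) := by
  have h := tendsto_integral_fresnelExp_eighthRoot_mul.sub tendsto_fresnelArc_zero
  rw [sub_zero] at h
  exact h.congr fun R => (integral_fresnelExp_eq_sub_fresnelArc R).symm
end

section
/- Let f : I → ℝ be C² on compact I with c₁ ≤ f''(x) ≤ c₂ for all x (0 < c₁ ≤ c₂), let j/k ∈ f'(I) with x₀ ∈ I satisfying f'(x₀) = j/k, and set β = ‖k f(x₀) − j x₀‖. Then for every x ∈ I with |x − x₀| ≤ √(β/(c₂ k)) one has |k f(x) − j x − (k f(x₀) − j x₀)| ≤ β/2; in particular ‖k f(x) − j x‖ ≥ β/2 for all such x (assuming β ≤ 1/2). -/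
/-!
Put `g x = k f(x) − j x`. Then `g'(x₀) = 0` and `0 ≤ g'' ≤ c₂ k`, so both `g` and
`c₂ k (x − x₀)² / 2 − g` are convex with a stationary point, hence a minimum, at `x₀`. This gives
`0 ≤ g x − g x₀ ≤ c₂ k (x − x₀)² / 2 ≤ β / 2` in the given range, and the distance to the nearest
integer, being `1`-Lipschitz, then moves by at most `β / 2`.
-/

open Set

theorem convexOn_of_hasDerivAt2_nonneg {D : Set ℝ} (hD : Convex ℝ D) {f f' f'' : ℝ → ℝ}
    (hf : ∀ x ∈ D, HasDerivAt f (f' x) x) (hf' : ∀ x ∈ D, HasDerivAt f' (f'' x) x)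
    (hf'' : ∀ x ∈ D, 0 ≤ f'' x) : ConvexOn ℝ D f :=
  convexOn_of_hasDerivWithinAt2_nonneg hD
    (fun x hx => (hf x hx).continuousAt.continuousWithinAt)
    (fun x hx => (hf x (interior_subset hx)).hasDerivWithinAt)
    (fun x hx => (hf' x (interior_subset hx)).hasDerivWithinAt)
    (fun x hx => hf'' x (interior_subset hx))

theorem ConvexOn.isMinOn_of_hasDerivAt_eq_zero {S : Set ℝ} {f : ℝ → ℝ} {x₀ : ℝ}
    (hf : ConvexOn ℝ S f) (hx₀ : x₀ ∈ S) (hd : HasDerivAt f 0 x₀) : IsMinOn f S x₀ := by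
  intro y hy
  show f x₀ ≤ f y
  rcases lt_trichotomy y x₀ with hlt | rfl | hgt
  · have hslope : slope f y x₀ ≤ 0 := hf.slope_le_of_hasDerivAt hy hx₀ hlt hd
    rw [slope_def_field, div_le_iff₀ (sub_pos.2 hlt)] at hslope
    linarith
  · exact le_rfl
  · have hslope : 0 ≤ slope f x₀ y := hf.le_slope_of_hasDerivAt hx₀ hy hgt hd
    rw [slope_def_field, le_div_iff₀ (sub_pos.2 hgt)] at hslope
    linarith

section QuadraticBounds

variable {D : Set ℝ} {g g' g'' : ℝ → ℝ} {x₀ : ℝ}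

theorem mul_sq_le_sub_of_le_deriv2 (hD : Convex ℝ D) (hx₀ : x₀ ∈ D)
    (hg : ∀ x ∈ D, HasDerivAt g (g' x) x) (hg' : ∀ x ∈ D, HasDerivAt g' (g'' x) x)
    {c : ℝ} (hc : ∀ x ∈ D, c ≤ g'' x) (hstat : g' x₀ = 0) :
    ∀ x ∈ D, c / 2 * (x - x₀) ^ 2 ≤ g x - g x₀ := by
  set h : ℝ → ℝ := fun x => g x - c / 2 * (x - x₀) ^ 2
  have hd : ∀ x ∈ D, HasDerivAt h (g' x - c * (x - x₀)) x := fun x hx =>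
    ((hg x hx).sub ((((hasDerivAt_id x).sub_const x₀).pow 2).const_mul (c / 2))).congr_deriv
      (by simp only [id, mul_one]; ring)
  have hd' : ∀ x ∈ D, HasDerivAt (fun x => g' x - c * (x - x₀)) (g'' x - c) x := fun x hx =>
    ((hg' x hx).sub (((hasDerivAt_id x).sub_const x₀).const_mul c)).congr_deriv (by simp)
  have hconvex : ConvexOn ℝ D h :=
    convexOn_of_hasDerivAt2_nonneg hD hd hd' fun x hx => sub_nonneg.2 (hc x hx)
  have hmin : IsMinOn h D x₀ :=
    hconvex.isMinOn_of_hasDerivAt_eq_zero hx₀ (by simpa [hstat] using hd x₀ hx₀)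
  intro x hx
  have hle : h x₀ ≤ h x := hmin hx
  simp only [h, sub_self, zero_pow two_ne_zero, mul_zero, sub_zero] at hle
  linarith

theorem sub_le_mul_sq_of_deriv2_le (hD : Convex ℝ D) (hx₀ : x₀ ∈ D)
    (hg : ∀ x ∈ D, HasDerivAt g (g' x) x) (hg' : ∀ x ∈ D, HasDerivAt g' (g'' x) x)
    {C : ℝ} (hC : ∀ x ∈ D, g'' x ≤ C) (hstat : g' x₀ = 0) :
    ∀ x ∈ D, g x - g x₀ ≤ C / 2 * (x - x₀) ^ 2 := by
  intro x hx
  have := mul_sq_le_sub_of_le_deriv2 (g := -g) (g' := -g') (g'' := -g'') (c := -C) hD hx₀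
    (fun y hy => (hg y hy).neg) (fun y hy => (hg' y hy).neg)
    (fun y hy => neg_le_neg (hC y hy)) (by simp [hstat]) x hx
  simp only [Pi.neg_apply] at this
  linarith

end QuadraticBounds

theorem abs_sub_round_le_abs_sub_add {α : Type*} [Field α] [LinearOrder α] [IsStrictOrderedRing α]
    [FloorRing α] (x y : α) : |x - round x| ≤ |x - y| + |y - round y| :=
  calc |x - round x| ≤ |x - round y| := round_le x (round y)
    _ ≤ |x - y| + |y - round y| := abs_sub_le x y (round y)

theorem phase_near_stationary_point_general
    (a b c₁ c₂ : ℝ) (hc₁ : 0 < c₁)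
    (f f' f'' : ℝ → ℝ) (j k : ℤ) (hk : 0 < k) (x₀ : ℝ)
    (hder1 : ∀ x ∈ Icc a b, HasDerivAt f (f' x) x)
    (hder2 : ∀ x ∈ Icc a b, HasDerivAt f' (f'' x) x)
    (hbounds : ∀ x ∈ Icc a b, c₁ ≤ f'' x ∧ f'' x ≤ c₂)
    (hx₀ : x₀ ∈ Icc a b) (hstat : f' x₀ = (j : ℝ) / (k : ℝ)) :
    ∀ x ∈ Icc a b,
      |x - x₀| ≤ Real.sqrt
          (|(k : ℝ) * f x₀ - (j : ℝ) * x₀ - round ((k : ℝ) * f x₀ - (j : ℝ) * x₀)| /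
            (c₂ * (k : ℝ))) →
        |(k : ℝ) * f x - (j : ℝ) * x - ((k : ℝ) * f x₀ - (j : ℝ) * x₀)| ≤
            |(k : ℝ) * f x₀ - (j : ℝ) * x₀ -
              round ((k : ℝ) * f x₀ - (j : ℝ) * x₀)| / 2 ∧
          |(k : ℝ) * f x₀ - (j : ℝ) * x₀ - round ((k : ℝ) * f x₀ - (j : ℝ) * x₀)| / 2 ≤
            |(k : ℝ) * f x - (j : ℝ) * x - round ((k : ℝ) * f x - (j : ℝ) * x)| := by
  intro x hx hdist
  set g : ℝ → ℝ := fun y => (k : ℝ) * f y - (j : ℝ) * y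
  set β := |g x₀ - round (g x₀)|
  have hk' : (0 : ℝ) < k := Int.cast_pos.2 hk
  have hc₂ : 0 < c₂ := hc₁.trans_le ((hbounds x₀ hx₀).1.trans (hbounds x₀ hx₀).2)
  have hg : ∀ y ∈ Icc a b, HasDerivAt g (k * f' y - j) y := fun y hy =>
    (((hder1 y hy).const_mul (k : ℝ)).sub ((hasDerivAt_id' y).const_mul (j : ℝ))).congr_deriv
      (by rw [mul_one])
  have hg' : ∀ y ∈ Icc a b, HasDerivAt (fun y => k * f' y - j) (k * f'' y) y := fun y hy =>
    ((hder2 y hy).const_mul (k : ℝ)).sub_const (j : ℝ)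
  have hgstat : (k : ℝ) * f' x₀ - j = 0 := by
    rw [hstat, mul_div_cancel₀ _ hk'.ne', sub_self]
  have hlower := mul_sq_le_sub_of_le_deriv2 (convex_Icc a b) hx₀ hg hg' (c := 0)
    (fun y hy => mul_nonneg hk'.le (hc₁.trans_le (hbounds y hy).1).le) hgstat x hx
  have hupper := sub_le_mul_sq_of_deriv2_le (convex_Icc a b) hx₀ hg hg' (C := c₂ * k)
    (fun y hy => by rw [mul_comm]; exact mul_le_mul_of_nonneg_right (hbounds y hy).2 hk'.le)
    hgstat x hx
  have hsq : (x - x₀) ^ 2 ≤ β / (c₂ * k) :=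
    (Real.sq_le (by positivity)).2 (abs_le.1 hdist)
  have hquad : c₂ * k / 2 * (x - x₀) ^ 2 ≤ β / 2 := by
    rw [le_div_iff₀ (by positivity)] at hsq
    linarith
  have hnear : |g x - g x₀| ≤ β / 2 := abs_le.2 ⟨by linarith, by linarith⟩
  refine ⟨hnear, ?_⟩
  have := abs_sub_round_le_abs_sub_add (g x₀) (g x)
  rw [abs_sub_comm (g x₀) (g x)] at this
  linarith

/-- Near a stationary point the phase stays close to its value there: with `f` of class
`C²` on `[a,b]`, `c₁ ≤ f'' ≤ c₂` (`0 < c₁ ≤ c₂`), `f'(x₀) = j/k` and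
`β = ‖k f(x₀) − j x₀‖ ≤ 1/2`, for every `x ∈ [a,b]` with `|x − x₀| ≤ √(β/(c₂k))` one has
`|k f(x) − jx − (k f(x₀) − j x₀)| ≤ β/2`, and in particular `‖k f(x) − jx‖ ≥ β/2`.
Here `‖y‖ = |y − round y|` is the distance to the nearest integer. -/
theorem phase_near_stationary_point
    (a b c₁ c₂ : ℝ) (hab : a ≤ b) (hc₁ : 0 < c₁) (hc₁c₂ : c₁ ≤ c₂)
    (f f' f'' : ℝ → ℝ) (j k : ℤ) (hk : 0 < k) (x₀ : ℝ)
    (hder1 : ∀ x ∈ Icc a b, HasDerivAt f (f' x) x)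
    (hder2 : ∀ x ∈ Icc a b, HasDerivAt f' (f'' x) x)
    (hbounds : ∀ x ∈ Icc a b, c₁ ≤ f'' x ∧ f'' x ≤ c₂)
    (hx₀ : x₀ ∈ Icc a b) (hstat : f' x₀ = (j : ℝ) / (k : ℝ))
    (hβ : |(k : ℝ) * f x₀ - (j : ℝ) * x₀ -
        round ((k : ℝ) * f x₀ - (j : ℝ) * x₀)| ≤ 1 / 2) :
    ∀ x ∈ Icc a b,
      |x - x₀| ≤ Real.sqrt
          (|(k : ℝ) * f x₀ - (j : ℝ) * x₀ - round ((k : ℝ) * f x₀ - (j : ℝ) * x₀)| /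
            (c₂ * (k : ℝ))) →
        |(k : ℝ) * f x - (j : ℝ) * x - ((k : ℝ) * f x₀ - (j : ℝ) * x₀)| ≤
            |(k : ℝ) * f x₀ - (j : ℝ) * x₀ -
              round ((k : ℝ) * f x₀ - (j : ℝ) * x₀)| / 2 ∧
          |(k : ℝ) * f x₀ - (j : ℝ) * x₀ - round ((k : ℝ) * f x₀ - (j : ℝ) * x₀)| / 2 ≤
            |(k : ℝ) * f x - (j : ℝ) * x - round ((k : ℝ) * f x - (j : ℝ) * x)| :=
  phase_near_stationary_point_general a b c₁ c₂ hc₁ f f' f'' j k hk x₀ hder1 hder2 hbounds hx₀ hstat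
end
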